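/- arXiv:2303.04121 — 6 statements merged into one kernel-verified Lean document; each statement's English description precedes it below -/
import Mathlib

section
/- For all λ > 0, τ > 0 and t ≥ 0, ∫₀^∞ sin(2πu/τ) · sin(2π(t+u)/τ) · e^{−λ(t+u)} du = 2π e^{−λt} (λτ sin(2πt/τ) + 4π cos(2πt/τ)) / (λ (λ²τ² + 16π²)). -/
open MeasureTheory Set Real

/-- Autocovariance integral for the exponential trawl with sinusoidal periodic kernel:
`∫₀^∞ sin(2πu/τ) sin(2π(t+u)/τ) e^{−λ(t+u)} du
  = 2π e^{−λt} (λτ sin(2πt/τ) + 4π cos(2πt/τ)) / (λ(λ²τ² + 16π²))`. -/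
theorem integral_sin_sin_exp (lam τ t : ℝ) (hlam : 0 < lam) (hτ : 0 < τ) (ht : 0 ≤ t) :
    ∫ u in Ioi (0:ℝ),
        Real.sin (2 * π * u / τ) * Real.sin (2 * π * (t + u) / τ) * Real.exp (-lam * (t + u))
      = 2 * π * Real.exp (-lam * t) *
          (lam * τ * Real.sin (2 * π * t / τ) + 4 * π * Real.cos (2 * π * t / τ)) /
        (lam * (lam ^ 2 * τ ^ 2 + 16 * π ^ 2)) := by
  have hτ' : τ ≠ 0 := hτ.ne'
  have hlam' : lam ≠ 0 := hlam.ne'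
  set a : ℝ := 2 * π / τ with ha
  set c : ℝ := 2 * π * t / τ with hc
  have ha0 : 0 < a := by positivity
  set D : ℝ := 2 * (lam ^ 2 + (2 * a) ^ 2) with hD
  have hD0 : 0 < D := by positivity
  set F : ℝ → ℝ := fun u => Real.exp (-lam * t) *
      (-(Real.cos c) / (2 * lam) * Real.exp (-lam * u)
        + Real.exp (-lam * u) * (lam * Real.cos (c + 2 * a * u)
            - 2 * a * Real.sin (c + 2 * a * u)) / D) with hF
  set f' : ℝ → ℝ := fun u => Real.exp (-lam * t) * Real.exp (-lam * u) *
      (Real.cos c - Real.cos (c + 2 * a * u)) / 2 with hf'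
  -- derivative
  have hderiv : ∀ u ∈ Ici (0:ℝ), HasDerivAt F (f' u) u := by
    intro u _
    have he : HasDerivAt (fun u : ℝ => Real.exp (-lam * u)) (-lam * Real.exp (-lam * u)) u := by
      simpa [mul_comm] using ((hasDerivAt_id u).const_mul (-lam)).exp
    have harg : HasDerivAt (fun u : ℝ => c + 2 * a * u) (2 * a) u := by
      simpa using ((hasDerivAt_id u).const_mul (2 * a)).const_add c
    have hcos : HasDerivAt (fun u : ℝ => Real.cos (c + 2 * a * u))
        (-Real.sin (c + 2 * a * u) * (2 * a)) u := harg.cos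
    have hsin : HasDerivAt (fun u : ℝ => Real.sin (c + 2 * a * u))
        (Real.cos (c + 2 * a * u) * (2 * a)) u := harg.sin
    have h1 := (he.const_mul (-(Real.cos c) / (2 * lam)))
    have h2 := (he.mul ((hcos.const_mul lam).sub (hsin.const_mul (2 * a)))).div_const D
    have := ((h1.add h2).const_mul (Real.exp (-lam * t)))
    refine HasDerivAt.congr_deriv this ?_
    rw [hf', hD, Pi.sub_apply]
    field_simp
    ring
  -- integrability
  have hint : IntegrableOn f' (Ioi (0:ℝ)) := by
    have hbase : IntegrableOn (fun u : ℝ => Real.exp (-lam * u)) (Ioi 0) :=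
      exp_neg_integrableOn_Ioi 0 hlam
    refine hbase.mono' ?_ ?_
    · apply Continuous.aestronglyMeasurable
      fun_prop
    · filter_upwards with u
      rw [hf']
      have h1 : Real.exp (-lam * t) ≤ 1 := by
        apply Real.exp_le_one_iff.mpr
        nlinarith
      have h2 : |Real.cos c - Real.cos (c + 2 * a * u)| ≤ 2 := by
        have := Real.abs_cos_le_one c
        have := Real.abs_cos_le_one (c + 2 * a * u)
        rw [abs_sub_le_iff] at *
        constructor <;> nlinarith [neg_abs_le (Real.cos c), le_abs_self (Real.cos c),
          neg_abs_le (Real.cos (c + 2 * a * u)), le_abs_self (Real.cos (c + 2 * a * u))]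
      have he0 : (0:ℝ) < Real.exp (-lam * u) := Real.exp_pos _
      have he1 : (0:ℝ) < Real.exp (-lam * t) := Real.exp_pos _
      rw [norm_eq_abs, abs_div, abs_mul, abs_mul, abs_exp, abs_exp,
        show |(2:ℝ)| = 2 by norm_num]
      nlinarith [mul_nonneg he0.le (abs_nonneg (Real.cos c - Real.cos (c + 2 * a * u))),
        mul_le_mul_of_nonneg_left h2 he0.le,
        mul_le_mul_of_nonneg_right h1 (mul_nonneg he0.le (abs_nonneg (Real.cos c - Real.cos (c + 2 * a * u))))]
  -- limit at infinity
  have htend : Filter.Tendsto F Filter.atTop (nhds 0) := by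
    have he : Filter.Tendsto (fun u : ℝ => Real.exp (-lam * u)) Filter.atTop (nhds 0) := by
      apply Real.tendsto_exp_atBot.comp
      exact Filter.Tendsto.const_mul_atTop_of_neg (neg_neg_iff_pos.mpr hlam) Filter.tendsto_id
    have hb : Filter.IsBoundedUnder (· ≤ ·) Filter.atTop
        (fun u => ‖Real.exp (-lam * t) * (-(Real.cos c) / (2 * lam)
          + (lam * Real.cos (c + 2 * a * u) - 2 * a * Real.sin (c + 2 * a * u)) / D)‖) := by
      refine Filter.isBoundedUnder_of ⟨Real.exp (-lam * t) *
        (|Real.cos c| / (2 * lam) + (lam + 2 * a) / D), fun u => ?_⟩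
      rw [norm_eq_abs, abs_mul, abs_exp]
      gcongr
      calc |(-(Real.cos c) / (2 * lam)
          + (lam * Real.cos (c + 2 * a * u) - 2 * a * Real.sin (c + 2 * a * u)) / D)|
          ≤ |(-(Real.cos c)) / (2 * lam)|
            + |(lam * Real.cos (c + 2 * a * u) - 2 * a * Real.sin (c + 2 * a * u)) / D| :=
            abs_add_le _ _
        _ ≤ |Real.cos c| / (2 * lam) + (lam + 2 * a) / D := by
            rw [abs_div, abs_div, abs_neg]
            gcongr
            · rw [abs_of_pos (by positivity : (0:ℝ) < 2 * lam)]
            · calc |lam * Real.cos (c + 2 * a * u) - 2 * a * Real.sin (c + 2 * a * u)|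
                  ≤ |lam * Real.cos (c + 2 * a * u)| + |2 * a * Real.sin (c + 2 * a * u)| :=
                    abs_sub _ _
                _ ≤ lam + 2 * a := by
                    rw [abs_mul, abs_mul, abs_of_pos hlam, abs_of_pos (by positivity : (0:ℝ) < 2*a)]
                    nlinarith [Real.abs_cos_le_one (c + 2 * a * u),
                      Real.abs_sin_le_one (c + 2 * a * u)]
            · rw [abs_of_pos hD0]
    have := he.zero_mul_isBoundedUnder_le hb
    refine this.congr fun u => ?_
    rw [hF]
    ring
  -- integrand equals f'
  have hcongr : ∀ u : ℝ,
      Real.sin (2 * π * u / τ) * Real.sin (2 * π * (t + u) / τ) * Real.exp (-lam * (t + u))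
        = f' u := by
    intro u
    have e1 : 2 * π * u / τ = a * u := by rw [ha]; ring
    have e2 : 2 * π * (t + u) / τ = c + a * u := by rw [ha, hc]; ring
    rw [e1, e2, hf']
    show Real.sin (a * u) * Real.sin (c + a * u) * Real.exp (-lam * (t + u))
      = Real.exp (-lam * t) * Real.exp (-lam * u) * (Real.cos c - Real.cos (c + 2 * a * u)) / 2
    rw [show c + 2 * a * u = c + a * u + a * u by ring, Real.cos_add (c + a * u) (a * u),
      Real.sin_add c (a * u), Real.cos_add c (a * u),
      show -lam * (t + u) = -lam * t + -lam * u by ring, Real.exp_add]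
    linear_combination (Real.exp (-lam * t) * Real.exp (-lam * u) * Real.cos c / 2) *
      Real.sin_sq_add_cos_sq (a * u)
  calc ∫ u in Ioi (0:ℝ),
        Real.sin (2 * π * u / τ) * Real.sin (2 * π * (t + u) / τ) * Real.exp (-lam * (t + u))
      = ∫ u in Ioi (0:ℝ), f' u := by
        exact integral_congr_ae (Filter.Eventually.of_forall fun u => hcongr u)
    _ = 0 - F 0 := integral_Ioi_of_hasDerivAt_of_tendsto' hderiv hint htend
    _ = _ := by
        rw [hF, hD, hc, ha]
        simp only [mul_zero, add_zero, Real.exp_zero]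
        have hpos : lam ^ 2 * τ ^ 2 + 16 * π ^ 2 > 0 := by positivity
        field_simp
        ring
end

section
/- For all λ > 0, τ > 0 and t ≥ 0, (∫₀^∞ sin(2πu/τ) sin(2π(t+u)/τ) e^{−λ(t+u)} du) / (∫₀^∞ e^{−λu} sin²(2πu/τ) du) = e^{−λt} · (1/(4π)) · (λτ sin(2πt/τ) + 4π cos(2πt/τ)). In particular, the function c(t) = (1/(4π))(λτ sin(2πt/τ) + 4π cos(2πt/τ)) is τ-periodic and satisfies c(0) = 1. -/
open MeasureTheory Set Real Filter

lemma exp_trig_integrable (b a : ℝ) (hb : 0 < b) (f : ℝ → ℝ) (hf : Measurable f)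
    (hbd : ∀ x, |f x| ≤ 1) :
    IntegrableOn (fun u => Real.exp (-b * u) * f u) (Ioi (0:ℝ)) := by
  refine (exp_neg_integrableOn_Ioi 0 hb).mono' ?_ ?_
  · exact ((Real.measurable_exp.comp (measurable_const.mul measurable_id)).mul hf).aestronglyMeasurable
  · filter_upwards with x
    rw [norm_mul, Real.norm_eq_abs, Real.norm_eq_abs, abs_of_pos (Real.exp_pos _)]
    calc Real.exp (-b*x) * |f x| ≤ Real.exp (-b*x) * 1 :=
          mul_le_mul_of_nonneg_left (hbd x) (Real.exp_pos _).le
      _ = Real.exp (-b*x) := mul_one _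

lemma exp_mul_tendsto_zero (b C : ℝ) (hb : 0 < b) (f : ℝ → ℝ) (hbd : ∀ x, |f x| ≤ C) :
    Tendsto (fun u => Real.exp (-b * u) * f u) atTop (nhds 0) := by
  have h1 : Tendsto (fun u : ℝ => Real.exp (-b * u) * C) atTop (nhds 0) := by
    have h2 : Tendsto (fun u : ℝ => Real.exp (-b * u)) atTop (nhds 0) := by
      have := Real.tendsto_exp_atBot.comp (tendsto_id.const_mul_atTop_of_neg (neg_lt_zero.2 hb))
      exact this
    simpa using h2.mul_const C
  refine squeeze_zero_norm (fun x => ?_) h1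
  rw [norm_mul, Real.norm_eq_abs, Real.norm_eq_abs, abs_of_pos (Real.exp_pos _)]
  exact mul_le_mul_of_nonneg_left (hbd x) (Real.exp_pos _).le

lemma integral_exp_sin' (b a : ℝ) (hb : 0 < b) :
    ∫ u in Ioi (0:ℝ), Real.exp (-b * u) * Real.sin (a * u) = a / (b ^ 2 + a ^ 2) := by
  have hb2 : (0:ℝ) < b ^ 2 + a ^ 2 := by positivity
  set F : ℝ → ℝ := fun u =>
    Real.exp (-b * u) * (-(b * Real.sin (a * u)) - a * Real.cos (a * u)) / (b ^ 2 + a ^ 2) with hF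
  have hderiv : ∀ u ∈ Ici (0:ℝ), HasDerivAt F (Real.exp (-b * u) * Real.sin (a * u)) u := by
    intro u _
    have hlin : ∀ c : ℝ, HasDerivAt (fun u : ℝ => c * u) c u := fun c => by
      simpa using (hasDerivAt_id u).const_mul c
    have he : HasDerivAt (fun u : ℝ => Real.exp (-b * u)) (Real.exp (-b * u) * (-b)) u :=
      (hlin (-b)).exp
    have hs : HasDerivAt (fun u : ℝ => Real.sin (a * u)) (Real.cos (a * u) * a) u :=
      (hlin a).sin
    have hc : HasDerivAt (fun u : ℝ => Real.cos (a * u)) (-Real.sin (a * u) * a) u :=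
      (hlin a).cos
    have h2 : HasDerivAt (fun u : ℝ => -(b * Real.sin (a * u)) - a * Real.cos (a * u))
        (-(b * (Real.cos (a * u) * a)) - a * (-Real.sin (a * u) * a)) u :=
      ((hs.const_mul b).neg).sub (hc.const_mul a)
    have := (he.mul h2).div_const (b ^ 2 + a ^ 2)
    refine this.congr_deriv ?_
    rw [div_eq_iff hb2.ne']
    ring
  have hint : IntegrableOn (fun u => Real.exp (-b * u) * Real.sin (a * u)) (Ioi (0:ℝ)) :=
    exp_trig_integrable b a hb _ (Real.measurable_sin.comp (measurable_const.mul measurable_id))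
      (fun x => Real.abs_sin_le_one _)
  have htend : Tendsto F atTop (nhds 0) := by
    have := exp_mul_tendsto_zero b ((b + |a|) / (b ^ 2 + a ^ 2)) hb
      (fun u => (-(b * Real.sin (a * u)) - a * Real.cos (a * u)) / (b ^ 2 + a ^ 2))
      (fun x => by
        rw [abs_div, abs_of_pos hb2, div_le_div_iff_of_pos_right hb2]
        calc |(-(b * Real.sin (a * x)) - a * Real.cos (a * x))|
            ≤ |b * Real.sin (a * x)| + |a * Real.cos (a * x)| := by
              rw [← abs_neg (b * Real.sin (a*x))] ; exact abs_sub _ _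
          _ ≤ b + |a| := by
              rw [abs_mul, abs_mul, abs_of_pos hb]
              have h1 := Real.abs_sin_le_one (a * x)
              have h2 := Real.abs_cos_le_one (a * x)
              nlinarith [abs_nonneg a, abs_nonneg (Real.sin (a*x)), abs_nonneg (Real.cos (a*x))])
    refine this.congr (fun u => ?_)
    simp [hF, mul_div_assoc]
  rw [MeasureTheory.integral_Ioi_of_hasDerivAt_of_tendsto' hderiv hint htend]
  simp [hF]
  field_simp

lemma integral_exp_cos' (b a : ℝ) (hb : 0 < b) :
    ∫ u in Ioi (0:ℝ), Real.exp (-b * u) * Real.cos (a * u) = b / (b ^ 2 + a ^ 2) := by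
  have hb2 : (0:ℝ) < b ^ 2 + a ^ 2 := by positivity
  set F : ℝ → ℝ := fun u =>
    Real.exp (-b * u) * (a * Real.sin (a * u) - b * Real.cos (a * u)) / (b ^ 2 + a ^ 2) with hF
  have hderiv : ∀ u ∈ Ici (0:ℝ), HasDerivAt F (Real.exp (-b * u) * Real.cos (a * u)) u := by
    intro u _
    have hlin : ∀ c : ℝ, HasDerivAt (fun u : ℝ => c * u) c u := fun c => by
      simpa using (hasDerivAt_id u).const_mul c
    have he : HasDerivAt (fun u : ℝ => Real.exp (-b * u)) (Real.exp (-b * u) * (-b)) u :=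
      (hlin (-b)).exp
    have hs : HasDerivAt (fun u : ℝ => Real.sin (a * u)) (Real.cos (a * u) * a) u :=
      (hlin a).sin
    have hc : HasDerivAt (fun u : ℝ => Real.cos (a * u)) (-Real.sin (a * u) * a) u :=
      (hlin a).cos
    have h2 : HasDerivAt (fun u : ℝ => a * Real.sin (a * u) - b * Real.cos (a * u))
        (a * (Real.cos (a * u) * a) - b * (-Real.sin (a * u) * a)) u :=
      (hs.const_mul a).sub (hc.const_mul b)
    have := (he.mul h2).div_const (b ^ 2 + a ^ 2)
    refine this.congr_deriv ?_
    rw [div_eq_iff hb2.ne']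
    ring
  have hint : IntegrableOn (fun u => Real.exp (-b * u) * Real.cos (a * u)) (Ioi (0:ℝ)) :=
    exp_trig_integrable b a hb _ (Real.measurable_cos.comp (measurable_const.mul measurable_id))
      (fun x => Real.abs_cos_le_one _)
  have htend : Tendsto F atTop (nhds 0) := by
    have := exp_mul_tendsto_zero b ((|a| + b) / (b ^ 2 + a ^ 2)) hb
      (fun u => (a * Real.sin (a * u) - b * Real.cos (a * u)) / (b ^ 2 + a ^ 2))
      (fun x => by
        rw [abs_div, abs_of_pos hb2, div_le_div_iff_of_pos_right hb2]
        calc |a * Real.sin (a * x) - b * Real.cos (a * x)|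
            ≤ |a * Real.sin (a * x)| + |b * Real.cos (a * x)| := abs_sub _ _
          _ ≤ |a| + b := by
              rw [abs_mul, abs_mul, abs_of_pos hb]
              have h1 := Real.abs_sin_le_one (a * x)
              have h2 := Real.abs_cos_le_one (a * x)
              nlinarith [abs_nonneg a, abs_nonneg (Real.sin (a*x)), abs_nonneg (Real.cos (a*x))])
    refine this.congr (fun u => ?_)
    simp [hF, mul_div_assoc]
  rw [MeasureTheory.integral_Ioi_of_hasDerivAt_of_tendsto' hderiv hint htend]
  simp [hF]
  field_simp

/-- Autocorrelation factorization for the exponential trawl with sinusoidal kernel: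
the autocorrelation ratio equals `e^{−λt} c(t)` where
`c(t) = (1/(4π))(λτ sin(2πt/τ) + 4π cos(2πt/τ))` is τ-periodic with `c 0 = 1`. -/
theorem exp_trawl_autocorrelation_factorization (lam τ : ℝ) (hlam : 0 < lam) (hτ : 0 < τ) :
    (∀ t ≥ (0:ℝ),
      (∫ u in Ioi (0:ℝ),
          Real.sin (2 * π * u / τ) * Real.sin (2 * π * (t + u) / τ) *
            Real.exp (-lam * (t + u))) /
        (∫ u in Ioi (0:ℝ), Real.exp (-lam * u) * (Real.sin (2 * π * u / τ)) ^ 2)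
      = Real.exp (-lam * t) *
          ((1 / (4 * π)) *
            (lam * τ * Real.sin (2 * π * t / τ) + 4 * π * Real.cos (2 * π * t / τ)))) ∧
    (∀ x ≥ (0:ℝ),
      (1 / (4 * π)) *
          (lam * τ * Real.sin (2 * π * (x + τ) / τ) + 4 * π * Real.cos (2 * π * (x + τ) / τ))
        = (1 / (4 * π)) *
            (lam * τ * Real.sin (2 * π * x / τ) + 4 * π * Real.cos (2 * π * x / τ))) ∧
    (1 / (4 * π)) *
        (lam * τ * Real.sin (2 * π * 0 / τ) + 4 * π * Real.cos (2 * π * 0 / τ)) = 1 := by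
  have hπ : (0:ℝ) < π := Real.pi_pos
  have hτ' : τ ≠ 0 := hτ.ne'
  refine ⟨?_, ?_, ?_⟩
  · intro t ht
    set ω : ℝ := 2 * π / τ with hω
    have hω0 : 0 < ω := by positivity
    -- integrability facts
    have hint_s : IntegrableOn (fun u => Real.exp (-lam * u) * Real.sin (2 * ω * u)) (Ioi (0:ℝ)) :=
      exp_trig_integrable lam (2*ω) hlam _
        (Real.measurable_sin.comp (measurable_const.mul measurable_id))
        (fun x => Real.abs_sin_le_one _)
    have hint_c0 : IntegrableOn (fun u => Real.exp (-lam * u) * Real.cos (0 * u)) (Ioi (0:ℝ)) :=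
      exp_trig_integrable lam 0 hlam _
        (Real.measurable_cos.comp (measurable_const.mul measurable_id))
        (fun x => Real.abs_cos_le_one _)
    have hint_ca : IntegrableOn (fun u => Real.exp (-lam * u) * Real.cos (2 * ω * u)) (Ioi (0:ℝ)) :=
      exp_trig_integrable lam (2*ω) hlam _
        (Real.measurable_cos.comp (measurable_const.mul measurable_id))
        (fun x => Real.abs_cos_le_one _)
    set A : ℝ := Real.exp (-lam * t) * Real.sin (ω * t) / 2 with hA
    set B : ℝ := Real.exp (-lam * t) * Real.cos (ω * t) / 2 with hB
    -- pointwise identity for the numerator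
    have keyN : ∀ u : ℝ,
        Real.sin (2 * π * u / τ) * Real.sin (2 * π * (t + u) / τ) * Real.exp (-lam * (t + u))
        = A * (Real.exp (-lam * u) * Real.sin (2 * ω * u)) +
          (B * (Real.exp (-lam * u) * Real.cos (0 * u)) -
           B * (Real.exp (-lam * u) * Real.cos (2 * ω * u))) := by
      intro u
      have e1 : 2 * π * u / τ = ω * u := by rw [hω]; ring
      have e2 : 2 * π * (t + u) / τ = ω * t + ω * u := by rw [hω]; field_simp
      have e3 : -lam * (t + u) = -lam * t + -lam * u := by ring
      have e4 : 2 * ω * u = 2 * (ω * u) := by ring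
      rw [e1, e2, e3, e4, Real.exp_add, Real.sin_add, Real.sin_two_mul, Real.cos_two_mul,
        zero_mul, Real.cos_zero, hA, hB]
      have hsq : Real.cos (ω * u) ^ 2 = 1 - Real.sin (ω * u) ^ 2 := by
        nlinarith [Real.sin_sq_add_cos_sq (ω * u)]
      rw [hsq]; ring
    -- pointwise identity for the denominator
    have keyD : ∀ u : ℝ,
        Real.exp (-lam * u) * (Real.sin (2 * π * u / τ)) ^ 2
        = (1/2) * (Real.exp (-lam * u) * Real.cos (0 * u)) -
          (1/2) * (Real.exp (-lam * u) * Real.cos (2 * ω * u)) := by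
      intro u
      have e1 : 2 * π * u / τ = ω * u := by rw [hω]; ring
      have e4 : 2 * ω * u = 2 * (ω * u) := by ring
      rw [e1, e4, Real.cos_two_mul, zero_mul, Real.cos_zero]
      have hsq : Real.cos (ω * u) ^ 2 = 1 - Real.sin (ω * u) ^ 2 := by
        nlinarith [Real.sin_sq_add_cos_sq (ω * u)]
      rw [hsq]; ring
    have hN : (∫ u in Ioi (0:ℝ),
        Real.sin (2 * π * u / τ) * Real.sin (2 * π * (t + u) / τ) * Real.exp (-lam * (t + u)))
        = A * (2 * ω / (lam ^ 2 + (2 * ω) ^ 2)) +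
          (B * (lam / (lam ^ 2 + 0 ^ 2)) - B * (lam / (lam ^ 2 + (2 * ω) ^ 2))) := by
      have hint2 : IntegrableOn (fun u => B * (Real.exp (-lam * u) * Real.cos (0 * u)) -
          B * (Real.exp (-lam * u) * Real.cos (2 * ω * u))) (Ioi (0:ℝ)) :=
        (hint_c0.const_mul B).sub (hint_ca.const_mul B)
      simp only [keyN]
      rw [MeasureTheory.integral_add (hint_s.const_mul A) hint2,
        MeasureTheory.integral_sub (hint_c0.const_mul B) (hint_ca.const_mul B),
        MeasureTheory.integral_const_mul, MeasureTheory.integral_const_mul,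
        MeasureTheory.integral_const_mul,
        integral_exp_sin' lam (2*ω) hlam, integral_exp_cos' lam 0 hlam,
        integral_exp_cos' lam (2*ω) hlam]
    have hD : (∫ u in Ioi (0:ℝ), Real.exp (-lam * u) * (Real.sin (2 * π * u / τ)) ^ 2)
        = (1/2) * (lam / (lam ^ 2 + 0 ^ 2)) - (1/2) * (lam / (lam ^ 2 + (2 * ω) ^ 2)) := by
      simp only [keyD]
      rw [MeasureTheory.integral_sub (hint_c0.const_mul (1/2)) (hint_ca.const_mul (1/2)),
        MeasureTheory.integral_const_mul, MeasureTheory.integral_const_mul,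
        integral_exp_cos' lam 0 hlam, integral_exp_cos' lam (2*ω) hlam]
    have hden_pos : 0 < (1/2) * (lam / (lam ^ 2 + 0 ^ 2)) - (1/2) * (lam / (lam ^ 2 + (2 * ω) ^ 2)) := by
      have h1 : lam / (lam ^ 2 + (2 * ω) ^ 2) < lam / (lam ^ 2 + 0 ^ 2) := by
        apply div_lt_div_of_pos_left hlam (by positivity)
        nlinarith
      linarith
    rw [hN, hD, div_eq_iff hden_pos.ne']
    have harg1 : 2 * π * t / τ = ω * t := by rw [hω]; ring
    rw [hA, hB, harg1, hω]
    have hden2 : lam ^ 2 + (2 * (2 * π / τ)) ^ 2 ≠ 0 := by positivity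
    field_simp
    ring
  · intro x _
    have e : 2 * π * (x + τ) / τ = 2 * π * x / τ + 2 * π := by field_simp
    rw [e, Real.sin_add_two_pi, Real.cos_add_two_pi]
  · have hπ' : π ≠ 0 := hπ.ne'
    simp [mul_zero, zero_div, Real.sin_zero, Real.cos_zero]
    field_simp
end

section
/- Let Δ > 0 and let f : ℝ × ℝ → ℝ be measurable. Define F_Δ : ℝ × [0,Δ] → [0,∞] by F_Δ(x,u) = Σ_{j∈ℤ} |f(x, u + jΔ)|, and assume ∫_{ℝ×[0,Δ]} F_Δ(x,u)² dx du < ∞. Then Σ_{j∈ℤ} ∫_{ℝ×ℝ} |f(x,s)| · |f(x, s + jΔ)| dx ds = ∫_{ℝ×[0,Δ]} F_Δ(x,u)² dx du < ∞. -/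
open MeasureTheory Set
open scoped ENNReal

/-- Periodization of the Lebesgue integral on ℝ. -/
lemma periodize_lintegral (Δ : ℝ) (hΔ : 0 < Δ) (g : ℝ → ℝ≥0∞) :
    ∫⁻ s, g s = ∑' k : ℤ, ∫⁻ u in Ico (0:ℝ) Δ, g (u + (k : ℝ) * Δ) := by
  have hunion : (⋃ k : ℤ, Ico ((k : ℝ) * Δ) ((k : ℝ) * Δ + Δ)) = univ := by
    refine eq_univ_iff_forall.mpr fun s => ?_
    refine mem_iUnion.mpr ⟨⌊s / Δ⌋, ?_, ?_⟩
    · have h1 : (⌊s / Δ⌋ : ℝ) ≤ s / Δ := Int.floor_le _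
      exact (le_div_iff₀ hΔ).mp h1
    · have h2 : s / Δ < (⌊s / Δ⌋ : ℝ) + 1 := Int.lt_floor_add_one _
      have := (div_lt_iff₀ hΔ).mp h2
      nlinarith
  have hdisj : Pairwise (Function.onFun Disjoint fun k : ℤ => Ico ((k : ℝ) * Δ) ((k : ℝ) * Δ + Δ)) := by
    intro k l hkl
    simp only [Function.onFun, Set.Ico_disjoint_Ico]
    rcases hkl.lt_or_gt with h | h
    · have hk1 : (k : ℝ) + 1 ≤ l := by exact_mod_cast Int.add_one_le_iff.mpr h
      refine le_trans (min_le_left _ _) (le_trans ?_ (le_max_right _ _))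
      nlinarith
    · have hk1 : (l : ℝ) + 1 ≤ k := by exact_mod_cast Int.add_one_le_iff.mpr h
      refine le_trans (min_le_right _ _) (le_trans ?_ (le_max_left _ _))
      nlinarith
  have htrans : ∀ k : ℤ, (∫⁻ s in Ico ((k : ℝ) * Δ) ((k : ℝ) * Δ + Δ), g s)
      = ∫⁻ u in Ico (0:ℝ) Δ, g (u + (k : ℝ) * Δ) := by
    intro k
    rw [← lintegral_indicator measurableSet_Ico, ← lintegral_indicator measurableSet_Ico]
    rw [← lintegral_add_right_eq_self
      (fun s => (Ico ((k : ℝ) * Δ) ((k : ℝ) * Δ + Δ)).indicator g s) ((k : ℝ) * Δ)]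
    refine lintegral_congr fun u => ?_
    by_cases hu : u ∈ Ico (0:ℝ) Δ
    · have hu' : u + (k : ℝ) * Δ ∈ Ico ((k : ℝ) * Δ) ((k : ℝ) * Δ + Δ) := by
        constructor <;> [linarith [hu.1]; linarith [hu.2]]
      rw [indicator_of_mem hu', indicator_of_mem hu]
    · have hu' : u + (k : ℝ) * Δ ∉ Ico ((k : ℝ) * Δ) ((k : ℝ) * Δ + Δ) := by
        intro hc
        exact hu ⟨by linarith [hc.1], by linarith [hc.2]⟩
      rw [indicator_of_notMem hu', indicator_of_notMem hu]
  calc ∫⁻ s, g s = ∫⁻ s in ⋃ k : ℤ, Ico ((k : ℝ) * Δ) ((k : ℝ) * Δ + Δ), g s := by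
        rw [hunion, Measure.restrict_univ]
    _ = ∑' k : ℤ, ∫⁻ s in Ico ((k : ℝ) * Δ) ((k : ℝ) * Δ + Δ), g s :=
        lintegral_iUnion (fun _ => measurableSet_Ico) hdisj g
    _ = ∑' k : ℤ, ∫⁻ u in Ico (0:ℝ) Δ, g (u + (k : ℝ) * Δ) := tsum_congr htrans

/-- Periodization identity: if `F_Δ(x,u) = Σ_{j∈ℤ} |f(x, u+jΔ)|` is square-integrable
on `ℝ × [0,Δ]`, then `Σ_{j∈ℤ} ∫∫ |f(x,s)||f(x,s+jΔ)| dx ds = ∫_{ℝ×[0,Δ]} F_Δ² < ∞`. -/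
theorem periodization_identity_abs
    (Δ : ℝ) (hΔ : 0 < Δ) (f : ℝ × ℝ → ℝ) (hf : Measurable f)
    (F : ℝ × ℝ → ℝ≥0∞)
    (hF : ∀ x u : ℝ, F (x, u) = ∑' j : ℤ, ENNReal.ofReal |f (x, u + (j : ℝ) * Δ)|)
    (hFL2 : (∫⁻ x : ℝ, ∫⁻ u in Icc (0:ℝ) Δ, (F (x, u)) ^ 2) < ⊤) :
    (∑' j : ℤ, ∫⁻ x : ℝ, ∫⁻ s : ℝ, ENNReal.ofReal (|f (x, s)| * |f (x, s + (j : ℝ) * Δ)|))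
        = (∫⁻ x : ℝ, ∫⁻ u in Icc (0:ℝ) Δ, (F (x, u)) ^ 2) ∧
    (∑' j : ℤ, ∫⁻ x : ℝ, ∫⁻ s : ℝ, ENNReal.ofReal (|f (x, s)| * |f (x, s + (j : ℝ) * Δ)|))
        < ⊤ := by
  -- measurability of the integrand on the product
  have hmeas : ∀ j : ℤ, Measurable fun p : ℝ × ℝ =>
      ENNReal.ofReal (|f p| * |f (p.1, p.2 + (j : ℝ) * Δ)|) := by
    intro j
    exact (hf.abs.mul ((hf.comp (measurable_fst.prodMk
      (measurable_snd.add_const _))).abs)).ennreal_ofReal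
  have hfx : ∀ x : ℝ, Measurable fun s : ℝ => f (x, s) :=
    fun x => hf.comp measurable_prodMk_left
  -- pointwise in x identity
  have hkey : ∀ x : ℝ,
      (∑' j : ℤ, ∫⁻ s : ℝ, ENNReal.ofReal (|f (x, s)| * |f (x, s + (j : ℝ) * Δ)|))
        = ∫⁻ u in Icc (0:ℝ) Δ, (F (x, u)) ^ 2 := by
    intro x
    set a : ℝ → ℝ≥0∞ := fun s => ENNReal.ofReal |f (x, s)| with ha
    have hameas : Measurable a := ((hfx x).abs).ennreal_ofReal
    have hsplit : ∀ s t : ℝ, ENNReal.ofReal (|f (x, s)| * |f (x, t)|) = a s * a t := by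
      intro s t
      rw [ENNReal.ofReal_mul (abs_nonneg _)]
    calc (∑' j : ℤ, ∫⁻ s : ℝ, ENNReal.ofReal (|f (x, s)| * |f (x, s + (j : ℝ) * Δ)|))
        = ∑' j : ℤ, ∑' k : ℤ, ∫⁻ u in Ico (0:ℝ) Δ,
            a (u + (k : ℝ) * Δ) * a (u + (k : ℝ) * Δ + (j : ℝ) * Δ) := by
          refine tsum_congr fun j => ?_
          rw [periodize_lintegral Δ hΔ
            (fun s => ENNReal.ofReal (|f (x, s)| * |f (x, s + (j : ℝ) * Δ)|))]
          exact tsum_congr fun k => lintegral_congr fun u => hsplit _ _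
      _ = ∑' k : ℤ, ∑' j : ℤ, ∫⁻ u in Ico (0:ℝ) Δ,
            a (u + (k : ℝ) * Δ) * a (u + (k : ℝ) * Δ + (j : ℝ) * Δ) := ENNReal.tsum_comm
      _ = ∑' k : ℤ, ∫⁻ u in Ico (0:ℝ) Δ,
            a (u + (k : ℝ) * Δ) * ∑' j : ℤ, a (u + ((j : ℝ) * Δ)) := by
          refine tsum_congr fun k => ?_
          rw [← lintegral_tsum (f := fun (j : ℤ) (u : ℝ) =>
              a (u + (k : ℝ) * Δ) * a (u + (k : ℝ) * Δ + (j : ℝ) * Δ))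
            (fun j => ((hameas.comp (measurable_add_const ((k : ℝ) * Δ))).mul
              (hameas.comp ((measurable_add_const ((k : ℝ) * Δ)).add_const
                ((j : ℝ) * Δ)))).aemeasurable)]
          refine lintegral_congr fun u => ?_
          rw [ENNReal.tsum_mul_left]
          congr 1
          -- reindex j ↦ j + k
          rw [← (Equiv.addRight k).tsum_eq (fun j : ℤ => a (u + (j : ℝ) * Δ))]
          refine tsum_congr fun j => ?_
          simp only [Equiv.coe_addRight]
          push_cast
          ring_nf
      _ = ∑' k : ℤ, ∫⁻ u in Ico (0:ℝ) Δ, a (u + (k : ℝ) * Δ) * F (x, u) := by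
          refine tsum_congr fun k => lintegral_congr fun u => ?_
          rw [hF x u]
      _ = ∫⁻ u in Ico (0:ℝ) Δ, (∑' k : ℤ, a (u + (k : ℝ) * Δ)) * F (x, u) := by
          have hFmeas : Measurable fun u : ℝ => F (x, u) := by
            have : (fun u : ℝ => F (x, u))
                = fun u => ∑' j : ℤ, ENNReal.ofReal |f (x, u + (j : ℝ) * Δ)| := by
              funext u; exact hF x u
            rw [this]
            exact Measurable.ennreal_tsum fun j =>
              (((hfx x).comp (measurable_add_const _)).abs).ennreal_ofReal
          rw [← lintegral_tsum (f := fun (k : ℤ) (u : ℝ) => a (u + (k : ℝ) * Δ) * F (x, u))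
            (fun k =>
            ((hameas.comp (measurable_add_const ((k : ℝ) * Δ))).mul hFmeas).aemeasurable)]
          refine lintegral_congr fun u => ?_
          rw [ENNReal.tsum_mul_right]
      _ = ∫⁻ u in Ico (0:ℝ) Δ, (F (x, u)) ^ 2 := by
          refine lintegral_congr fun u => ?_
          rw [hF x u, sq]
      _ = ∫⁻ u in Icc (0:ℝ) Δ, (F (x, u)) ^ 2 := by
          rw [Measure.restrict_congr_set Ico_ae_eq_Icc]
  have hmain : (∑' j : ℤ, ∫⁻ x : ℝ, ∫⁻ s : ℝ,
      ENNReal.ofReal (|f (x, s)| * |f (x, s + (j : ℝ) * Δ)|))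
        = ∫⁻ x : ℝ, ∫⁻ u in Icc (0:ℝ) Δ, (F (x, u)) ^ 2 := by
    rw [← lintegral_tsum (fun j => ((hmeas j).lintegral_prod_right').aemeasurable)]
    exact lintegral_congr fun x => hkey x
  exact ⟨hmain, hmain ▸ hFL2⟩
end

section
/- Let Δ > 0 and let f : ℝ × ℝ → ℝ be measurable such that the function F_Δ(x,u) = Σ_{j∈ℤ} |f(x, u + jΔ)| satisfies ∫_{ℝ×[0,Δ]} F_Δ(x,u)² dx du < ∞. Then the series Σ_{j∈ℤ} ∫_{ℝ×ℝ} f(x,s) f(x, s + jΔ) dx ds converges absolutely and Σ_{j∈ℤ} ∫_{ℝ×ℝ} f(x,s) f(x, s + jΔ) dx ds = ∫_{ℝ×[0,Δ]} ( Σ_{j∈ℤ} f(x, u + jΔ) )² dx du. -/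
set_option linter.unusedVariables false
set_option linter.unusedSectionVars false

open MeasureTheory Set
open scoped ENNReal

section Helpers

lemma ennnorm_tsum_le' {ι : Type*} [Countable ι] (a : ι → ℝ) :
    (‖∑' i, a i‖₊ : ℝ≥0∞) ≤ ∑' i, (‖a i‖₊ : ℝ≥0∞) := by
  by_cases h : Summable fun i => ‖a i‖
  · calc (‖∑' i, a i‖₊ : ℝ≥0∞) = ENNReal.ofReal ‖∑' i, a i‖ :=
          (ofReal_norm _).symm
    _ ≤ ENNReal.ofReal (∑' i, ‖a i‖) := ENNReal.ofReal_le_ofReal (norm_tsum_le_tsum_norm h)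
    _ = ∑' i, ENNReal.ofReal ‖a i‖ := ENNReal.ofReal_tsum_of_nonneg (fun i => norm_nonneg _) h
    _ = ∑' i, (‖a i‖₊ : ℝ≥0∞) := tsum_congr fun i => ofReal_norm _
  · rw [tsum_eq_zero_of_not_summable (fun hs => h hs.norm)]
    simp

lemma ennreal_double (b : ℤ → ℝ≥0∞) :
    ∑' j : ℤ, ∑' k : ℤ, b k * b (k + j) = (∑' k : ℤ, b k) ^ 2 := by
  calc ∑' j : ℤ, ∑' k : ℤ, b k * b (k + j) = ∑' k : ℤ, ∑' j : ℤ, b k * b (k + j) :=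
        ENNReal.tsum_comm
  _ = ∑' k : ℤ, ∑' m : ℤ, b k * b m :=
        tsum_congr fun k => (Equiv.addLeft k).tsum_eq (fun m => b k * b m)
  _ = ∑' k : ℤ, b k * ∑' m : ℤ, b m := tsum_congr fun k => ENNReal.tsum_mul_left
  _ = (∑' k : ℤ, b k) * (∑' m : ℤ, b m) := ENNReal.tsum_mul_right
  _ = (∑' k : ℤ, b k) ^ 2 := (sq _).symm

def shearEquiv : ℤ × ℤ ≃ ℤ × ℤ where
  toFun z := (z.2, z.2 + z.1)
  invFun z := (z.2 - z.1, z.1)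
  left_inv z := by simp
  right_inv z := by simp

lemma real_double (a : ℤ → ℝ) (h : Summable fun k => ‖a k‖) :
    ∑' j : ℤ, ∑' k : ℤ, a k * a (k + j) = (∑' k : ℤ, a k) ^ 2 := by
  have hprod : Summable fun z : ℤ × ℤ => a z.1 * a z.2 := summable_mul_of_summable_norm h h
  have hsum2 : Summable fun w : ℤ × ℤ => a w.2 * a (w.2 + w.1) := by
    have := (shearEquiv.summable_iff (f := fun z : ℤ × ℤ => a z.1 * a z.2)).2 hprod
    simpa [Function.comp_def, shearEquiv] using this
  calc ∑' j : ℤ, ∑' k : ℤ, a k * a (k + j)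
      = ∑' w : ℤ × ℤ, a w.2 * a (w.2 + w.1) := by
        refine (Summable.tsum_prod' hsum2 fun j => ?_).symm
        have := hsum2.comp_injective (i := fun k : ℤ => (j, k))
          (fun x y hxy => by simpa using hxy)
        simpa [Function.comp_def] using this
  _ = ∑' z : ℤ × ℤ, a z.1 * a z.2 := shearEquiv.tsum_eq (fun z : ℤ × ℤ => a z.1 * a z.2)
  _ = (∑' k : ℤ, a k) * (∑' k : ℤ, a k) := (tsum_mul_tsum_of_summable_norm h h).symm
  _ = (∑' k : ℤ, a k) ^ 2 := (sq _).symm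

lemma summable_iff_ennnorm_tsum_lt_top {ι : Type*} [Countable ι] (a : ι → ℝ) :
    Summable (fun i => ‖a i‖) ↔ (∑' i, (‖a i‖₊ : ℝ≥0∞)) < ⊤ := by
  rw [lt_top_iff_ne_top, ENNReal.tsum_coe_ne_top_iff_summable_coe]
  constructor
  · intro h; exact h.congr fun i => by simp
  · intro h; exact h.congr fun i => by simp

lemma tsum_real_repr {ι : Type*} [Countable ι] (a : ι → ℝ) :
    ∑' i, a i = if (∑' i, (‖a i‖₊ : ℝ≥0∞)) < ⊤ then
      (∑' i, ENNReal.ofReal (a i)).toReal - (∑' i, ENNReal.ofReal (-a i)).toReal else 0 := by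
  by_cases h : Summable fun i => ‖a i‖
  · rw [if_pos ((summable_iff_ennnorm_tsum_lt_top a).1 h)]
    have habs : ∀ i, max (a i) 0 ≤ ‖a i‖ := fun i => by
      rw [Real.norm_eq_abs]; exact max_le (le_abs_self _) (abs_nonneg _)
    have habs' : ∀ i, max (-a i) 0 ≤ ‖a i‖ := fun i => by
      rw [Real.norm_eq_abs]; exact max_le (neg_le_abs _) (abs_nonneg _)
    have hpos : Summable fun i => max (a i) 0 :=
      h.of_nonneg_of_le (fun i => le_max_right _ _) habs
    have hneg : Summable fun i => max (-a i) 0 :=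
      h.of_nonneg_of_le (fun i => le_max_right _ _) habs'
    have e1 : (∑' i, ENNReal.ofReal (a i)).toReal = ∑' i, max (a i) 0 := by
      rw [ENNReal.tsum_toReal_eq (fun i => ENNReal.ofReal_ne_top)]
      exact tsum_congr fun i => ENNReal.toReal_ofReal'
    have e2 : (∑' i, ENNReal.ofReal (-a i)).toReal = ∑' i, max (-a i) 0 := by
      rw [ENNReal.tsum_toReal_eq (fun i => ENNReal.ofReal_ne_top)]
      exact tsum_congr fun i => ENNReal.toReal_ofReal'
    rw [e1, e2, ← Summable.tsum_sub hpos hneg]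
    refine tsum_congr fun i => ?_
    rcases le_total 0 (a i) with hi | hi
    · rw [max_eq_left hi, max_eq_right (neg_nonpos.2 hi)]; ring
    · rw [max_eq_right hi, max_eq_left (neg_nonneg.2 hi)]; ring
  · rw [if_neg (fun hfin => h ((summable_iff_ennnorm_tsum_lt_top a).2 hfin))]
    exact tsum_eq_zero_of_not_summable (fun hs => h hs.norm)

lemma measurable_tsum_real {α : Type*} [MeasurableSpace α] {ι : Type*} [Countable ι]
    {g : ι → α → ℝ} (hg : ∀ i, Measurable (g i)) :
    Measurable fun x => ∑' i, g i x := by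
  have hrepr : (fun x => ∑' i, g i x) = fun x =>
      if (∑' i, (‖g i x‖₊ : ℝ≥0∞)) < ⊤ then
        (∑' i, ENNReal.ofReal (g i x)).toReal - (∑' i, ENNReal.ofReal (-g i x)).toReal
      else 0 := by
    funext x; exact tsum_real_repr fun i => g i x
  rw [hrepr]
  have hm1 : Measurable fun x => ∑' i, (‖g i x‖₊ : ℝ≥0∞) :=
    Measurable.ennreal_tsum fun i => (hg i).enorm
  have hm2 : Measurable fun x =>
      (∑' i, ENNReal.ofReal (g i x)).toReal - (∑' i, ENNReal.ofReal (-g i x)).toReal :=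
    ((Measurable.ennreal_tsum fun i => (hg i).ennreal_ofReal).ennreal_toReal).sub
      ((Measurable.ennreal_tsum fun i => (hg i).neg.ennreal_ofReal).ennreal_toReal)
  exact Measurable.ite (measurableSet_lt hm1 measurable_const) hm2 measurable_const

end Helpers

noncomputable section PerAux

def μ2 : Measure (ℝ × ℝ) := (volume : Measure ℝ).prod volume

def eT (c : ℝ) : ℝ × ℝ → ℝ × ℝ := fun p => (p.1, p.2 + c)

lemma mp_eT (c : ℝ) : MeasurePreserving (eT c) μ2 μ2 :=
  (MeasurePreserving.id volume).prod (measurePreserving_add_right volume c)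

lemma emb_eT (c : ℝ) : MeasurableEmbedding (eT c) :=
  (MeasurableEquiv.prodCongr (MeasurableEquiv.refl ℝ)
    (Homeomorph.addRight c).toMeasurableEquiv).measurableEmbedding

lemma meas_eT (c : ℝ) : Measurable (eT c) := (emb_eT c).measurable

variable {Δ : ℝ} (hΔ : 0 < Δ)

def strip (Δ : ℝ) (k : ℤ) : Set (ℝ × ℝ) :=
  (univ : Set ℝ) ×ˢ Ico ((k : ℝ) * Δ) ((k : ℝ) * Δ + Δ)

def base (Δ : ℝ) : Set (ℝ × ℝ) := (univ : Set ℝ) ×ˢ Ico 0 Δ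

lemma meas_strip (k : ℤ) : MeasurableSet (strip Δ k) :=
  MeasurableSet.univ.prod measurableSet_Ico

lemma image_base (k : ℤ) : eT ((k : ℝ) * Δ) '' base Δ = strip Δ k := by
  have h1 : eT ((k : ℝ) * Δ) '' base Δ =
      (univ : Set ℝ) ×ˢ ((· + (k : ℝ) * Δ) '' Ico 0 Δ) := by
    ext p
    simp only [eT, base, mem_image, mem_prod, mem_univ, true_and, Prod.ext_iff]
    constructor
    · rintro ⟨q, hq, h1, h2⟩; exact ⟨q.2, hq, by rw [← h2]⟩
    · rintro ⟨u, hu, h⟩; exact ⟨(p.1, u), hu, rfl, h⟩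
  rw [h1, image_add_const_Ico, strip, zero_add, add_comm Δ ((k:ℝ)*Δ)]

include hΔ in
lemma iUnion_strip : ⋃ k : ℤ, strip Δ k = univ := by
  refine eq_univ_of_forall fun p => mem_iUnion.2 ?_
  refine ⟨⌊p.2 / Δ⌋, mem_univ _, ?_, ?_⟩
  · exact (le_div_iff₀ hΔ).1 (Int.floor_le _)
  · have := Int.lt_floor_add_one (p.2 / Δ)
    have h2 := (div_lt_iff₀ hΔ).1 this
    calc p.2 < ((⌊p.2 / Δ⌋ : ℝ) + 1) * Δ := by rw [mul_comm]; linarith [h2]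
    _ = (⌊p.2 / Δ⌋ : ℝ) * Δ + Δ := by ring

include hΔ in
lemma disj_strip : Pairwise (Function.onFun Disjoint (strip Δ)) := by
  intro k m hkm
  have key : ∀ k m : ℤ, k < m → Disjoint (strip Δ k) (strip Δ m) := by
    intro k m h
    rw [Set.disjoint_left]
    rintro ⟨x, u⟩ hp hq
    have h1 : u < (k : ℝ) * Δ + Δ := hp.2.2
    have h2 : (m : ℝ) * Δ ≤ u := hq.2.1
    have h3 : (k : ℝ) + 1 ≤ (m : ℝ) := by exact_mod_cast h
    nlinarith
  rcases lt_or_gt_of_ne hkm with h | h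
  · exact key _ _ h
  · exact (key _ _ h).symm

include hΔ in
lemma lintegral_periodize (g : ℝ × ℝ → ℝ≥0∞) (hg : Measurable g) :
    ∫⁻ p, g p ∂μ2 = ∑' k : ℤ, ∫⁻ p in base Δ, g (eT ((k : ℝ) * Δ) p) ∂μ2 := by
  have h1 : ∫⁻ p, g p ∂μ2 = ∫⁻ p in ⋃ k : ℤ, strip Δ k, g p ∂μ2 := by
    rw [iUnion_strip hΔ, Measure.restrict_univ]
  rw [h1, lintegral_iUnion (fun k => meas_strip k) (disj_strip hΔ) g]
  refine tsum_congr fun k => ?_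
  rw [(mp_eT ((k : ℝ) * Δ)).setLIntegral_comp_emb (emb_eT _) g (base Δ), image_base]

include hΔ in
lemma integral_periodize (g : ℝ × ℝ → ℝ) (hg : Integrable g μ2) -- used
     :
    HasSum (fun k : ℤ => ∫ p in base Δ, g (eT ((k : ℝ) * Δ) p) ∂μ2) (∫ p, g p ∂μ2) := by
  have h1 : ∫ p, g p ∂μ2 = ∫ p in ⋃ k : ℤ, strip Δ k, g p ∂μ2 := by
    rw [iUnion_strip hΔ, Measure.restrict_univ]
  have h2 := hasSum_integral_iUnion (μ := μ2) (fun k => meas_strip (Δ := Δ) k) (disj_strip hΔ)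
    (by rw [iUnion_strip hΔ]; exact hg.integrableOn)
  rw [h1]
  convert h2 using 2 with k
  · rfl
  rw [← image_base (Δ := Δ) k, (mp_eT ((k : ℝ) * Δ)).setIntegral_image_emb (emb_eT _) g (base Δ)]

include hΔ in
lemma restrict_base_eq : μ2.restrict (base Δ) =
    (volume : Measure ℝ).prod (volume.restrict (Icc 0 Δ)) := by
  show ((volume : Measure ℝ).prod volume).restrict (base Δ) = _
  rw [base, ← Measure.prod_restrict, Measure.restrict_univ,
    Measure.restrict_congr_set Ico_ae_eq_Icc]

end PerAux

/-- Asymptotic variance of the sample mean: under the square-integrability of the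
periodization `Σ_j |f(x, u+jΔ)|`, the series `Σ_j ∫∫ f(x,s) f(x,s+jΔ) dx ds`
converges absolutely and equals `∫_{ℝ×[0,Δ]} (Σ_j f(x,u+jΔ))² dx du`. -/
theorem periodization_identity_signed
    (Δ : ℝ) (hΔ : 0 < Δ) (f : ℝ × ℝ → ℝ) (hf : Measurable f)
    (hFL2 : (∫⁻ x : ℝ, ∫⁻ u in Icc (0:ℝ) Δ,
        (∑' j : ℤ, ENNReal.ofReal |f (x, u + (j : ℝ) * Δ)|) ^ 2) < ⊤) :
    Summable (fun j : ℤ => |∫ x : ℝ, ∫ s : ℝ, f (x, s) * f (x, s + (j : ℝ) * Δ)|) ∧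
    (∑' j : ℤ, ∫ x : ℝ, ∫ s : ℝ, f (x, s) * f (x, s + (j : ℝ) * Δ))
      = ∫ x : ℝ, ∫ u in Icc (0:ℝ) Δ, (∑' j : ℤ, f (x, u + (j : ℝ) * Δ)) ^ 2 := by
  classical
  set B : Set (ℝ × ℝ) := base Δ with hB
  set a : ℤ → ℝ × ℝ → ℝ := fun j p => f (p.1, p.2 + (j : ℝ) * Δ) with ha_def
  have ha : ∀ j, Measurable (a j) := fun j =>
    hf.comp (measurable_fst.prodMk (measurable_snd.add_const _))
  set G : ℤ → ℝ × ℝ → ℝ := fun j p => f p * a j p with hG_def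
  have hG : ∀ j, Measurable (G j) := fun j => hf.mul (ha j)
  set Fenn : ℝ × ℝ → ℝ≥0∞ := fun p => ∑' j : ℤ, (‖a j p‖₊ : ℝ≥0∞) with hFenn_def
  have hFenn : Measurable Fenn := Measurable.ennreal_tsum fun j => (ha j).enorm
  -- translation identity
  have hGe : ∀ (j k : ℤ) (p : ℝ × ℝ), G j (eT ((k : ℝ) * Δ) p) = a k p * a (k + j) p := by
    intro j k p
    show f (p.1, p.2 + (k:ℝ)*Δ) * f ((p.1, p.2 + (k:ℝ)*Δ).1, (p.1, p.2 + (k:ℝ)*Δ).2 + (j:ℝ)*Δ)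
        = f (p.1, p.2 + (k:ℝ)*Δ) * f (p.1, p.2 + ((k + j : ℤ) : ℝ) * Δ)
    congr 3
    push_cast
    ring
  -- finiteness of ∫ Fenn² over the base strip
  have hfin : ∫⁻ p in B, Fenn p ^ 2 ∂μ2 < ⊤ := by
    rw [hB, restrict_base_eq hΔ]
    rw [lintegral_prod _ ((hFenn.pow_const 2).aemeasurable)]
    calc ∫⁻ x, ∫⁻ u in Icc (0:ℝ) Δ, Fenn (x, u) ^ 2
        = ∫⁻ x : ℝ, ∫⁻ u in Icc (0:ℝ) Δ,
            (∑' j : ℤ, ENNReal.ofReal |f (x, u + (j : ℝ) * Δ)|) ^ 2 := by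
          refine lintegral_congr fun x => lintegral_congr fun u => ?_
          congr 1
          exact tsum_congr fun j => by
            exact Real.enorm_eq_ofReal_abs _
    _ < ⊤ := hFL2
  -- master ENNReal computation
  have hnnG : ∀ (j k : ℤ) (p : ℝ × ℝ),
      (‖G j (eT ((k : ℝ) * Δ) p)‖₊ : ℝ≥0∞) = (‖a k p‖₊ : ℝ≥0∞) * (‖a (k + j) p‖₊ : ℝ≥0∞) := by
    intro j k p
    rw [hGe j k p, nnnorm_mul, ENNReal.coe_mul]
  have htot : ∑' j : ℤ, ∫⁻ p, (‖G j p‖₊ : ℝ≥0∞) ∂μ2 = ∫⁻ p in B, Fenn p ^ 2 ∂μ2 := by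
    have hper : ∀ j : ℤ, ∫⁻ p, (‖G j p‖₊ : ℝ≥0∞) ∂μ2
        = ∑' k : ℤ, ∫⁻ p in B, (‖a k p‖₊ : ℝ≥0∞) * (‖a (k + j) p‖₊ : ℝ≥0∞) ∂μ2 := by
      intro j
      rw [lintegral_periodize hΔ (fun p => (‖G j p‖₊ : ℝ≥0∞)) (hG j).enorm]
      exact tsum_congr fun k => lintegral_congr fun p => hnnG j k p
    calc ∑' j : ℤ, ∫⁻ p, (‖G j p‖₊ : ℝ≥0∞) ∂μ2
        = ∑' j : ℤ, ∑' k : ℤ, ∫⁻ p in B, (‖a k p‖₊ : ℝ≥0∞) * (‖a (k + j) p‖₊ : ℝ≥0∞) ∂μ2 :=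
          tsum_congr hper
    _ = ∑' j : ℤ, ∫⁻ p in B, ∑' k : ℤ, (‖a k p‖₊ : ℝ≥0∞) * (‖a (k + j) p‖₊ : ℝ≥0∞) ∂μ2 :=
          tsum_congr fun j => (lintegral_tsum fun k =>
            ((ha k).enorm.mul (ha (k + j)).enorm).aemeasurable).symm
    _ = ∫⁻ p in B, ∑' j : ℤ, ∑' k : ℤ, (‖a k p‖₊ : ℝ≥0∞) * (‖a (k + j) p‖₊ : ℝ≥0∞) ∂μ2 :=
          (lintegral_tsum fun j => (Measurable.ennreal_tsum fun k =>
            ((ha k).enorm.mul (ha (k + j)).enorm)).aemeasurable).symm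
    _ = ∫⁻ p in B, Fenn p ^ 2 ∂μ2 :=
          lintegral_congr fun p => ennreal_double fun k => (‖a k p‖₊ : ℝ≥0∞)
  have hGfin : ∀ j : ℤ, ∫⁻ p, (‖G j p‖₊ : ℝ≥0∞) ∂μ2 < ⊤ :=
    fun j => lt_of_le_of_lt (le_trans (ENNReal.le_tsum j) htot.le) hfin
  have hGint : ∀ j : ℤ, Integrable (G j) μ2 := fun j => ⟨(hG j).aestronglyMeasurable, hGfin j⟩
  -- iterated integral = product integral
  have hI : ∀ j : ℤ, (∫ x : ℝ, ∫ s : ℝ, f (x, s) * f (x, s + (j : ℝ) * Δ)) = ∫ p, G j p ∂μ2 :=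
    fun j => integral_integral (f := fun x s => f (x, s) * f (x, s + (j : ℝ) * Δ)) (hGint j)
  -- Summability
  have hsumm : Summable (fun j : ℤ => (∫⁻ p, (‖G j p‖₊ : ℝ≥0∞) ∂μ2).toReal) :=
    ENNReal.summable_toReal (by rw [htot]; exact hfin.ne)
  have hSummable : Summable (fun j : ℤ => |∫ x : ℝ, ∫ s : ℝ, f (x, s) * f (x, s + (j : ℝ) * Δ)|) := by
    refine hsumm.of_nonneg_of_le (fun j => abs_nonneg _) fun j => ?_
    rw [hI j]
    calc |∫ p, G j p ∂μ2| = ‖∫ p, G j p ∂μ2‖ := rfl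
    _ ≤ (∫⁻ p, ENNReal.ofReal ‖G j p‖ ∂μ2).toReal := norm_integral_le_lintegral_norm _
    _ = (∫⁻ p, (‖G j p‖₊ : ℝ≥0∞) ∂μ2).toReal := by
        congr 1
        exact lintegral_congr fun p => ofReal_norm _
  refine ⟨hSummable, ?_⟩
  -- now the identity
  set T : ℤ → ℝ × ℝ → ℝ := fun j p => ∑' k : ℤ, a k p * a (k + j) p with hT_def
  have hT : ∀ j, Measurable (T j) := fun j =>
    measurable_tsum_real fun k => (ha k).mul (ha (k + j))
  have hb1 : ∀ (j : ℤ) (p : ℝ × ℝ),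
      (∑' k : ℤ, (‖a k p * a (k + j) p‖₊ : ℝ≥0∞)) ≤ Fenn p ^ 2 := by
    intro j p
    calc ∑' k : ℤ, (‖a k p * a (k + j) p‖₊ : ℝ≥0∞)
        = ∑' k : ℤ, (‖a k p‖₊ : ℝ≥0∞) * (‖a (k + j) p‖₊ : ℝ≥0∞) := by
          exact tsum_congr fun k => by rw [nnnorm_mul, ENNReal.coe_mul]
    _ ≤ ∑' k : ℤ, (‖a k p‖₊ : ℝ≥0∞) * Fenn p :=
          Summable.tsum_le_tsum (fun k => mul_le_mul_right (ENNReal.le_tsum (k + j)) _)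
            ENNReal.summable ENNReal.summable
    _ = Fenn p * Fenn p := ENNReal.tsum_mul_right
    _ = Fenn p ^ 2 := (sq _).symm
  -- step A : ∫ G j = ∫_B T j
  have hjk : ∀ j : ℤ, ∫ p, G j p ∂μ2 = ∫ p in B, T j p ∂μ2 := by
    intro j
    have hper := ((integral_periodize hΔ (G j) (hGint j)).tsum_eq).symm
    have hper2 : ∫ p, G j p ∂μ2 = ∑' k : ℤ, ∫ p in B, a k p * a (k + j) p ∂μ2 := by
      rw [hper]
      exact tsum_congr fun k => integral_congr_ae (Filter.Eventually.of_forall fun p => hGe j k p)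
    rw [hper2]
    refine (integral_tsum (fun k => ((ha k).mul (ha (k + j))).aestronglyMeasurable) ?_).symm
    have : ∑' k : ℤ, ∫⁻ p in B, (‖a k p * a (k + j) p‖₊ : ℝ≥0∞) ∂μ2
        = ∫⁻ p in B, ∑' k : ℤ, (‖a k p * a (k + j) p‖₊ : ℝ≥0∞) ∂μ2 :=
      (lintegral_tsum fun k => ((ha k).mul (ha (k + j))).enorm.aemeasurable).symm
    refine this.trans_ne ?_
    exact ((lintegral_mono fun p => hb1 j p).trans_lt hfin).ne
  -- step B : swap tsum and integral over B
  have hstepB : ∑' j : ℤ, ∫ p in B, T j p ∂μ2 = ∫ p in B, ∑' j : ℤ, T j p ∂μ2 := by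
    refine (integral_tsum (fun j => (hT j).aestronglyMeasurable) ?_).symm
    have hTb : ∀ j : ℤ, ∫⁻ p in B, (‖T j p‖₊ : ℝ≥0∞) ∂μ2
        ≤ ∫⁻ p in B, ∑' k : ℤ, (‖a k p * a (k + j) p‖₊ : ℝ≥0∞) ∂μ2 :=
      fun j => lintegral_mono fun p => ennnorm_tsum_le' _
    refine ne_of_lt ?_
    calc ∑' j : ℤ, ∫⁻ p in B, (‖T j p‖₊ : ℝ≥0∞) ∂μ2
        ≤ ∑' j : ℤ, ∫⁻ p in B, ∑' k : ℤ, (‖a k p * a (k + j) p‖₊ : ℝ≥0∞) ∂μ2 :=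
          Summable.tsum_le_tsum hTb ENNReal.summable ENNReal.summable
    _ = ∫⁻ p in B, ∑' j : ℤ, ∑' k : ℤ, (‖a k p * a (k + j) p‖₊ : ℝ≥0∞) ∂μ2 :=
          (lintegral_tsum fun j => (Measurable.ennreal_tsum fun k =>
            ((ha k).mul (ha (k + j))).enorm).aemeasurable).symm
    _ = ∫⁻ p in B, Fenn p ^ 2 ∂μ2 := by
          refine lintegral_congr fun p => ?_
          rw [← ennreal_double fun k => (‖a k p‖₊ : ℝ≥0∞)]
          exact tsum_congr fun j => tsum_congr fun k => by rw [nnnorm_mul, ENNReal.coe_mul]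
    _ < ⊤ := hfin
  -- step C : pointwise a.e. identity
  set S : ℝ × ℝ → ℝ := fun p => ∑' j : ℤ, a j p with hS_def
  have hS : Measurable S := measurable_tsum_real ha
  have hae : ∀ᵐ p ∂(μ2.restrict B), Fenn p < ⊤ := by
    have h2 := ae_lt_top (hFenn.pow_const 2) hfin.ne
    filter_upwards [h2] with p hp
    rw [lt_top_iff_ne_top]
    intro h
    rw [h, ENNReal.top_pow (by norm_num)] at hp
    exact absurd hp (lt_irrefl _)
  have hstepC : ∫ p in B, ∑' j : ℤ, T j p ∂μ2 = ∫ p in B, S p ^ 2 ∂μ2 := by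
    refine integral_congr_ae ?_
    filter_upwards [hae] with p hp
    have hsumm : Summable fun k : ℤ => ‖a k p‖ :=
      (summable_iff_ennnorm_tsum_lt_top _).2 hp
    exact real_double (fun k => a k p) hsumm
  -- step D : back to iterated integral
  have hS2int : Integrable (fun p : ℝ × ℝ => S p ^ 2)
      ((volume : Measure ℝ).prod (volume.restrict (Icc (0:ℝ) Δ))) := by
    rw [← restrict_base_eq hΔ]
    refine ⟨(hS.pow_const 2).aestronglyMeasurable, ?_⟩
    have hbound : ∀ p : ℝ × ℝ, (‖S p ^ 2‖₊ : ℝ≥0∞) ≤ Fenn p ^ 2 := by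
      intro p
      have h1 : (‖S p‖₊ : ℝ≥0∞) ≤ Fenn p := ennnorm_tsum_le' fun j => a j p
      calc (‖S p ^ 2‖₊ : ℝ≥0∞) = (‖S p‖₊ : ℝ≥0∞) ^ 2 := by
            rw [sq, sq, nnnorm_mul, ENNReal.coe_mul]
      _ ≤ Fenn p ^ 2 := pow_le_pow_left' h1 2
    exact (lintegral_mono hbound).trans_lt hfin
  have hstepD : ∫ p in B, S p ^ 2 ∂μ2
      = ∫ x : ℝ, ∫ u in Icc (0:ℝ) Δ, (∑' j : ℤ, f (x, u + (j : ℝ) * Δ)) ^ 2 := by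
    rw [hB, restrict_base_eq hΔ]
    exact (integral_integral (f := fun x u => (∑' j : ℤ, f (x, u + (j : ℝ) * Δ)) ^ 2) hS2int).symm
  calc ∑' j : ℤ, ∫ x : ℝ, ∫ s : ℝ, f (x, s) * f (x, s + (j : ℝ) * Δ)
      = ∑' j : ℤ, ∫ p in B, T j p ∂μ2 := tsum_congr fun j => (hI j).trans (hjk j)
  _ = ∫ p in B, ∑' j : ℤ, T j p ∂μ2 := hstepB
  _ = ∫ p in B, S p ^ 2 ∂μ2 := hstepC
  _ = _ := hstepD
end

section
/- Let Δ > 0, p, q ∈ ℤ, and let f : ℝ × ℝ → ℝ be measurable such that the function (x,u) ↦ Σ_{j∈ℤ} f(x, u+jΔ)² belongs to L²(ℝ × [0,Δ]). For r ∈ ℤ define G̃_{r;Δ} : ℝ × ℝ → [0,∞] by G̃_{r;Δ}(x,u) = Σ_{j∈ℤ} |f(x, u+jΔ)| · |f(x, u+(j+r)Δ)| (so that G̃_{r;Δ}(x, u + Δ) = G̃_{r;Δ}(x,u) for all u). Then ∫_{ℝ×ℝ} G̃_{p;Δ}(x,s) · |f(x,s)| · |f(x, s + qΔ)| dx ds =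 ∫_{ℝ×[0,Δ]} G̃_{p;Δ}(x,u) · G̃_{q;Δ}(x,u) dx du < ∞. -/
/-!
Periodizing the `s`-integral over the translates `[0, Δ) + jΔ` turns the left side into
`∫_{[0,Δ]} Σ_j G̃_p(x, u + jΔ) |f(x, u + jΔ)| |f(x, u + (j + q)Δ)|`; since `G̃_p(x, ·)` is
`Δ`-periodic it factors out of the sum, and what remains is `G̃_q(x, u)`. For finiteness, AM-GM
and the shift invariance of sums over `ℤ` give `G̃_r(x, u) ≤ Σ_j f(x, u + jΔ)²`, whose square is
integrable by assumption.
-/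

open MeasureTheory Set
open scoped ENNReal

lemma lintegral_eq_setLIntegral_Ioc_tsum_add_int_mul {Δ : ℝ} (hΔ : 0 < Δ) {h : ℝ → ℝ≥0∞}
    (hh : Measurable h) :
    ∫⁻ s, h s = ∫⁻ u in Ioc 0 Δ, ∑' j : ℤ, h (u + j * Δ) := by
  let e : ℤ ≃ AddSubgroup.zmultiples Δ :=
    Equiv.ofBijective (fun n => ⟨n • Δ, n, rfl⟩)
      ⟨fun _ _ hmn => smul_left_injective ℤ hΔ.ne' (congrArg Subtype.val hmn),
        fun ⟨_, n, hn⟩ => ⟨n, Subtype.ext hn⟩⟩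
  rw [lintegral_tsum fun j => by fun_prop,
    (isAddFundamentalDomain_Ioc hΔ 0 volume).lintegral_eq_tsum'' h, zero_add, ← e.tsum_eq]
  refine tsum_congr fun j => setLIntegral_congr_fun measurableSet_Ioc fun u _ => ?_
  simp [e, AddSubgroup.vadd_def, add_comm]

/-- `G̃_{r;Δ}(x, u)` is `lagProductSum (f (x, ·)) Δ r u`. -/
noncomputable def lagProductSum (g : ℝ → ℝ) (Δ : ℝ) (r : ℤ) (u : ℝ) : ℝ≥0∞ :=
  ∑' j : ℤ, ENNReal.ofReal (|g (u + j * Δ)| * |g (u + (j + r) * Δ)|)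

lemma tsum_ofReal_abs_mul_abs_add_le (a : ℤ → ℝ) (r : ℤ) :
    ∑' j, ENNReal.ofReal (|a j| * |a (j + r)|) ≤ ∑' j, ENNReal.ofReal (a j ^ 2) := by
  set S := ∑' j, ENNReal.ofReal (a j ^ 2)
  have amgm : ∀ j, 2 * ENNReal.ofReal (|a j| * |a (j + r)|)
      ≤ ENNReal.ofReal (a j ^ 2) + ENNReal.ofReal (a (j + r) ^ 2) := fun j => by
    rw [← ENNReal.ofReal_add (sq_nonneg _) (sq_nonneg _), ← ENNReal.ofReal_ofNat 2,
      ← ENNReal.ofReal_mul zero_le_two, ← mul_assoc, ← sq_abs (a j), ← sq_abs (a (j + r))]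
    exact ENNReal.ofReal_le_ofReal (two_mul_le_add_sq _ _)
  refine (ENNReal.mul_le_mul_iff_right two_ne_zero ENNReal.ofNat_ne_top).mp ?_
  calc 2 * ∑' j, ENNReal.ofReal (|a j| * |a (j + r)|)
      = ∑' j, 2 * ENNReal.ofReal (|a j| * |a (j + r)|) := ENNReal.tsum_mul_left.symm
    _ ≤ ∑' j, (ENNReal.ofReal (a j ^ 2) + ENNReal.ofReal (a (j + r) ^ 2)) :=
      ENNReal.tsum_le_tsum amgm
    _ = S + S := by
      rw [ENNReal.tsum_add]
      congr 1
      exact (Equiv.addRight r).tsum_eq fun j => ENNReal.ofReal (a j ^ 2)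
    _ = 2 * S := (two_mul S).symm

namespace lagProductSum

variable {g : ℝ → ℝ} {Δ : ℝ}

lemma le_tsum_sq (r : ℤ) (u : ℝ) :
    lagProductSum g Δ r u ≤ ∑' j : ℤ, ENNReal.ofReal (g (u + j * Δ) ^ 2) := by
  simpa only [lagProductSum, Int.cast_add] using
    tsum_ofReal_abs_mul_abs_add_le (fun j : ℤ => g (u + j * Δ)) r

lemma add_int_mul (r k : ℤ) (u : ℝ) :
    lagProductSum g Δ r (u + k * Δ) = lagProductSum g Δ r u := by
  rw [lagProductSum, lagProductSum, ← (Equiv.subRight k).tsum_eq]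
  refine tsum_congr fun j => ?_
  push_cast [Equiv.subRight_apply]
  ring_nf

lemma measurable (hg : Measurable g) (r : ℤ) : Measurable (lagProductSum g Δ r) :=
  Measurable.tsum fun j => by fun_prop

lemma lintegral_mul_eq (hg : Measurable g) (hΔ : 0 < Δ) (p q : ℤ) :
    ∫⁻ s, lagProductSum g Δ p s * ENNReal.ofReal (|g s| * |g (s + q * Δ)|)
      = ∫⁻ u in Ioc 0 Δ, lagProductSum g Δ p u * lagProductSum g Δ q u := by
  have hp := measurable hg (Δ := Δ) p
  rw [lintegral_eq_setLIntegral_Ioc_tsum_add_int_mul hΔ (by fun_prop)]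
  refine lintegral_congr fun u => ?_
  simp only [add_int_mul, add_assoc, ← add_mul, ENNReal.tsum_mul_left]
  rfl

end lagProductSum

/-- Periodization identity for the fourth-cumulant term in the asymptotics of the
sample autocovariances: with `G̃_{r;Δ}(x,u) = Σ_j |f(x,u+jΔ)| |f(x,u+(j+r)Δ)|`,
`∫∫ G̃_{p;Δ}(x,s)|f(x,s)||f(x,s+qΔ)| dx ds = ∫_{ℝ×[0,Δ]} G̃_{p;Δ} G̃_{q;Δ} dx du < ∞`. -/
theorem periodization_identity_fourth_cumulant
    (Δ : ℝ) (hΔ : 0 < Δ) (p q : ℤ) (f : ℝ × ℝ → ℝ) (hf : Measurable f)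
    (G : ℤ → ℝ × ℝ → ℝ≥0∞)
    (hG : ∀ (r : ℤ) (x u : ℝ), G r (x, u)
      = ∑' j : ℤ, ENNReal.ofReal
          (|f (x, u + (j : ℝ) * Δ)| * |f (x, u + ((j : ℝ) + (r : ℝ)) * Δ)|))
    (hL2 : (∫⁻ x : ℝ, ∫⁻ u in Icc (0:ℝ) Δ,
        (∑' j : ℤ, ENNReal.ofReal ((f (x, u + (j : ℝ) * Δ)) ^ 2)) ^ 2) < ⊤) :
    (∫⁻ x : ℝ, ∫⁻ s : ℝ,
        G p (x, s) * ENNReal.ofReal (|f (x, s)| * |f (x, s + (q : ℝ) * Δ)|))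
      = (∫⁻ x : ℝ, ∫⁻ u in Icc (0:ℝ) Δ, G p (x, u) * G q (x, u)) ∧
    (∫⁻ x : ℝ, ∫⁻ u in Icc (0:ℝ) Δ, G p (x, u) * G q (x, u)) < ⊤ := by
  have hG' : ∀ r x u, G r (x, u) = lagProductSum (fun t => f (x, t)) Δ r u := hG
  simp only [hG']
  refine ⟨lintegral_congr fun x => ?_, lt_of_le_of_lt ?_ hL2⟩
  · rw [lagProductSum.lintegral_mul_eq (by fun_prop) hΔ, setLIntegral_congr Ioc_ae_eq_Icc]
  · refine lintegral_mono fun x => lintegral_mono fun u => ?_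
    rw [sq]
    exact mul_le_mul' (lagProductSum.le_tsum_sq p u) (lagProductSum.le_tsum_sq q u)
end

section
/- Let g : [0,∞) → [0,∞) be monotonically decreasing (antitone) and integrable. For t ≥ 0, let A = {(x,s) ∈ ℝ² : s ≤ 0 and 0 < x < g(−s)} and A_t = {(x,s) ∈ ℝ² : s ≤ t and 0 < x < g(t−s)}. Then the two-dimensional Lebesgue measure of A ∩ A_t equals ∫_t^∞ g(u) du. -/
/-!
For `s ≤ 0` antitonicity gives `g (t - s) ≤ g (-s)`, so over the half-line `s ≤ 0` the trawl set
`A_t` lies inside `A`, and `A ∩ A_t` is the region under `s ↦ g (t - s)` there. Its area is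
`∫_{s ≤ 0} g (t - s) ds`, which the reflection `u = t - s` turns into `∫_t^∞ g u du`.
-/

open MeasureTheory Set

theorem preimage_sub_left_Ici (t a : ℝ) : (fun s => t - s) ⁻¹' Ici (t - a) = Iic a := by
  ext s
  simp

theorem integrableOn_Iic_comp_sub_left_iff {E : Type*} [NormedAddCommGroup E] (f : ℝ → E)
    (t a : ℝ) : IntegrableOn (fun s => f (t - s)) (Iic a) ↔ IntegrableOn f (Ici (t - a)) := by
  rw [← preimage_sub_left_Ici t a]
  exact (Measure.measurePreserving_sub_left volume t).integrableOn_comp_preimage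
    (MeasurableEquiv.subLeft t).measurableEmbedding

theorem setIntegral_Iic_comp_sub_left {E : Type*} [NormedAddCommGroup E] [NormedSpace ℝ E]
    (f : ℝ → E) (t a : ℝ) : ∫ s in Iic a, f (t - s) = ∫ u in Ici (t - a), f u := by
  rw [← preimage_sub_left_Ici t a]
  exact (Measure.measurePreserving_sub_left volume t).setIntegral_preimage_emb
    (MeasurableEquiv.subLeft t).measurableEmbedding f _

theorem volume_prod_preimage_swap_regionBetween_zero {α : Type*} [MeasurableSpace α]
    {μ : Measure α} [SigmaFinite μ] {f : α → ℝ} {s : Set α} (hs : MeasurableSet s)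
    (hf : IntegrableOn f s μ) (hf_nonneg : ∀ y ∈ s, 0 ≤ f y) :
    volume.prod μ (Prod.swap ⁻¹' regionBetween 0 f s) = ENNReal.ofReal (∫ y in s, f y ∂μ) := by
  have h_swap : MeasurePreserving (MeasurableEquiv.prodComm : ℝ × α ≃ᵐ α × ℝ)
      (volume.prod μ) (μ.prod volume) := Measure.measurePreserving_swap
  calc volume.prod μ (Prod.swap ⁻¹' regionBetween 0 f s)
      = μ.prod volume (regionBetween 0 f s) := h_swap.measure_preimage_equiv _
    _ = ENNReal.ofReal (∫ y in s, f y ∂μ) := by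
      rw [volume_regionBetween_eq_integral (integrableOn_zero : IntegrableOn 0 s μ) hf hs
        hf_nonneg, sub_zero]

theorem trawl_inter_eq_preimage_swap_regionBetween {g : ℝ → ℝ} (hg : AntitoneOn g (Ici 0))
    {t : ℝ} (ht : 0 ≤ t) :
    {z : ℝ × ℝ | z.2 ≤ 0 ∧ 0 < z.1 ∧ z.1 < g (-z.2)} ∩
        {z : ℝ × ℝ | z.2 ≤ t ∧ 0 < z.1 ∧ z.1 < g (t - z.2)} =
      Prod.swap ⁻¹' regionBetween 0 (fun s => g (t - s)) (Iic 0) := by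
  ext ⟨x, s⟩
  simp only [mem_inter_iff, mem_ofPred_eq, mem_preimage, Prod.swap_prod_mk, regionBetween,
    mem_Iic, mem_Ioo, Pi.zero_apply]
  constructor
  · rintro ⟨⟨hs, hx, -⟩, -, -, hxt⟩
    exact ⟨hs, hx, hxt⟩
  · rintro ⟨hs, hx, hxt⟩
    have hg_le : g (t - s) ≤ g (-s) :=
      hg (mem_Ici.2 (by linarith)) (mem_Ici.2 (by linarith)) (by linarith)
    exact ⟨⟨hs, hx, hxt.trans_le hg_le⟩, hs.trans ht, hx, hxt⟩

/-- Overlap area of trawl sets: for an antitone integrable `g : [0,∞) → [0,∞)`,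
the Lebesgue measure of `A ∩ A_t` equals `∫_t^∞ g(u) du`, where
`A = {(x,s) : s ≤ 0, 0 < x < g(−s)}` and `A_t = {(x,s) : s ≤ t, 0 < x < g(t−s)}`. -/
theorem trawl_set_overlap_area
    (g : ℝ → ℝ) (hg_anti : AntitoneOn g (Ici 0))
    (hg_nonneg : ∀ x ≥ (0:ℝ), 0 ≤ g x)
    (hg_int : IntegrableOn g (Ioi 0))
    (t : ℝ) (ht : 0 ≤ t) :
    volume ({z : ℝ × ℝ | z.2 ≤ 0 ∧ 0 < z.1 ∧ z.1 < g (-z.2)} ∩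
            {z : ℝ × ℝ | z.2 ≤ t ∧ 0 < z.1 ∧ z.1 < g (t - z.2)})
      = ENNReal.ofReal (∫ u in Ioi t, g u) := by
  have h_int : IntegrableOn (fun s => g (t - s)) (Iic 0) := by
    rw [integrableOn_Iic_comp_sub_left_iff, sub_zero, integrableOn_Ici_iff_integrableOn_Ioi]
    exact hg_int.mono_set (Ioi_subset_Ioi ht)
  have h_nonneg : ∀ s ∈ Iic (0 : ℝ), 0 ≤ g (t - s) := fun s hs =>
    hg_nonneg _ (by linarith [mem_Iic.1 hs])
  rw [trawl_inter_eq_preimage_swap_regionBetween hg_anti ht, Measure.volume_eq_prod,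
    volume_prod_preimage_swap_regionBetween_zero measurableSet_Iic h_int h_nonneg,
    setIntegral_Iic_comp_sub_left, sub_zero, integral_Ici_eq_integral_Ioi]
end
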